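/- arXiv:2310.09360 — 3 statements merged into one kernel-verified Lean document; each statement's English description precedes it below -/
import Mathlib

section
/- For every x ∈ ∂D, the tangent cone satisfies T_D(x) = ∪_{S ∈ S(x)} [ (∩_{(i,j) ∈ T(x), j ∈ S_i} {z ∈ ℝ^n : (W̄_{i-1}(S) W_{ij})·z ≥ 0}) ∩ (∩_{(i,j) ∈ T(x), j ∉ S_i} {z ∈ ℝ^n : (W̄_{i-1}(S) W_{ij})·z ≤ 0}) ∩ {z ∈ ℝ^n : W̄(S)·z ≥ 0} ], with the convention that W̄_0(S) is the n × n identity matrix. -/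
/-- A feedforward ReLU network with `L` layers. `d 0` is the input dimension `n`;
`d i` is the width `M_i` of layer `i` for `1 ≤ i ≤ L`. `W i j : Fin (d i) → ℝ` is the
weight vector of neuron `j` in layer `i+1` (paper layer `i+1`), `r i j` its bias,
`Ω` the output weights and `ψ` the output bias. -/
structure ReluNet where
  L : ℕ
  hL : 1 ≤ L
  d : ℕ → ℕ
  W : (i : ℕ) → Fin (d (i + 1)) → Fin (d i) → ℝ
  r : (i : ℕ) → Fin (d (i + 1)) → ℝ
  Ω : Fin (d L) → ℝ
  ψ : ℝ

namespace ReluNet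

open Classical

/-- Layer outputs: `z N i x` is the output vector of paper layer `i` (`z N 0 x = x`). -/
def z (N : ReluNet) : (i : ℕ) → (Fin (N.d 0) → ℝ) → Fin (N.d i) → ℝ
  | 0, x => x
  | i + 1, x => fun j => max 0 ((∑ k, N.W i j k * z N i x k) + N.r i j)

/-- Pre-activation input of neuron `(i+1, j)` (paper indexing) at input `x`. -/
def pre (N : ReluNet) (i : ℕ) (j : Fin (N.d (i + 1))) (x : Fin (N.d 0) → ℝ) : ℝ :=
  (∑ k, N.W i j k * N.z i x k) + N.r i j

/-- The network output `b(x) = Ω ⬝ z_L(x) + ψ`. -/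
def b (N : ReluNet) (x : Fin (N.d 0) → ℝ) : ℝ :=
  (∑ j, N.Ω j * N.z N.L x j) + N.ψ

/-- An activation set: a set of neurons in each layer (`S i` lives in paper layer `i+1`). -/
abbrev ActSet (N : ReluNet) := (i : ℕ) → Set (Fin (N.d (i + 1)))

/-- The activation region `X̄(S)`: inputs whose pre-activation at neuron `(i,j)` is `≥ 0`
for `j ∈ S_i` and `≤ 0` for `j ∉ S_i`. -/
def region (N : ReluNet) (S : N.ActSet) : Set (Fin (N.d 0) → ℝ) :=
  {x | ∀ i < N.L, ∀ j : Fin (N.d (i + 1)),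
      (j ∈ S i → 0 ≤ N.pre i j x) ∧ (j ∉ S i → N.pre i j x ≤ 0)}

/-- `Wbar N S i j` is the column `W̄_{ij}(S) ∈ ℝ^n` (paper layer `i`); `Wbar N S 0` is the
identity matrix convention `W̄_0(S) = I`. -/
noncomputable def Wbar (N : ReluNet) (S : N.ActSet) : (i : ℕ) → Fin (N.d i) → Fin (N.d 0) → ℝ
  | 0, j => fun k => if k = j then 1 else 0
  | i + 1, j =>
      if j ∈ S i then (fun k => ∑ j', N.W i j j' * Wbar N S i j' k) else 0

/-- `rbar N S i j` is `r̄_{ij}(S)` (paper layer `i`); `rbar N S 0 = 0` by convention. -/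
noncomputable def rbar (N : ReluNet) (S : N.ActSet) : (i : ℕ) → Fin (N.d i) → ℝ
  | 0, _ => 0
  | i + 1, j =>
      if j ∈ S i then (∑ j', N.W i j j' * rbar N S i j') + N.r i j else 0

/-- `W̄(S) = W̄_L(S) Ω ∈ ℝ^n`. -/
noncomputable def WbarOut (N : ReluNet) (S : N.ActSet) : Fin (N.d 0) → ℝ :=
  fun k => ∑ j, N.Ω j * N.Wbar S N.L j k

/-- `r̄(S) = Ω ⬝ r̄_L(S) + ψ`. -/
noncomputable def rbarOut (N : ReluNet) (S : N.ActSet) : ℝ :=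
  (∑ j, N.Ω j * N.rbar S N.L j) + N.ψ

/-- `gradW N S i j = W̄_i(S) W_{(i+1)j} ∈ ℝ^n` (paper: `W̄_{i-1}(S) W_{ij}` for neuron
`(i,j)` with `i = ` my `i+1`). -/
noncomputable def gradW (N : ReluNet) (S : N.ActSet) (i : ℕ) (j : Fin (N.d (i + 1))) :
    Fin (N.d 0) → ℝ :=
  fun k => ∑ j', N.W i j j' * N.Wbar S i j' k

end ReluNet

/-- Euclidean distance from a point to a set in `ℝ^n` (it is `0` for the empty set,
matching the convention of `Metric.infDist`). -/
noncomputable def eInfDist {n : ℕ} (x : Fin n → ℝ) (A : Set (Fin n → ℝ)) : ℝ :=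
  sInf ((fun y => Real.sqrt (∑ k, (x k - y k) ^ 2)) '' A)

/-- The tangent cone `T_A(x) = {z : liminf_{τ→0⁺} dist(x + τz, A)/τ = 0}`, with `dist`
the Euclidean distance from a point to a set. -/
noncomputable def tangentCone {n : ℕ} (A : Set (Fin n → ℝ)) (x : Fin n → ℝ) :
    Set (Fin n → ℝ) :=
  {z | Filter.liminf (fun τ : ℝ => eInfDist (x + τ • z) A / τ)
        (nhdsWithin 0 (Set.Ioi 0)) = 0}

/-!
On each activation region `X̄(S)` the network is affine: every pre-activation and `b` itself are
affine functions with gradients `W̄_{i-1}(S) W_{ij}` and `W̄(S)`. If `z` satisfies the sign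
conditions of `S` at the neurons with zero pre-activation at `x` and `W̄(S)·z ≥ 0`, then `x + τz`
stays in `X̄(S) ∩ D` for small `τ > 0`, so `z` is tangent to `D`.

Conversely, `T_D(x)` lies in the positive tangent cone of `D`, and `D` is the finite union of the
pieces `D ∩ X̄(S)`, so `z` is tangent to one piece. Then `x` lies in that closed piece, and every
affine function vanishing at `x` and nonnegative on the piece has nonnegative derivative along `z`
by Fermat's rule.
-/

open Filter Set Topology

section TangentConeUnion

variable {R E : Type*} [AddCommGroup E] [SMul R E] [TopologicalSpace E] {x : E}

theorem tangentConeAt_empty : tangentConeAt R (∅ : Set E) x = ∅ := by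
  ext y
  simp [tangentConeAt_def, ← map₂_smul, ClusterPt]

theorem tangentConeAt_union (s t : Set E) :
    tangentConeAt R (s ∪ t) x = tangentConeAt R s x ∪ tangentConeAt R t x := by
  ext y
  simp only [tangentConeAt_def, preimage_union, nhdsWithin_union, ← map₂_smul, map₂_sup_right,
    mem_ofPred_eq, clusterPt_sup, mem_union]

theorem tangentConeAt_iUnion_subset {ι : Type*} [Finite ι] (s : ι → Set E) :
    tangentConeAt R (⋃ i, s i) x ⊆ ⋃ i, tangentConeAt R (s i) x := by
  classical
  have key (u : Finset ι) :
      tangentConeAt R (⋃ i ∈ u, s i) x ⊆ ⋃ i ∈ u, tangentConeAt R (s i) x := by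
    induction u using Finset.induction_on with
    | empty => simp [tangentConeAt_empty]
    | insert a u _ ih =>
      rw [Finset.set_biUnion_insert, Finset.set_biUnion_insert, tangentConeAt_union]
      exact union_subset_union_right _ ih
  have := Fintype.ofFinite ι
  simpa using key Finset.univ

end TangentConeUnion

theorem dotProduct_nonneg_of_mem_posTangentConeAt {ι : Type*} [Fintype ι] {A : Set (ι → ℝ)}
    {x z ℓ : ι → ℝ} (hA : ∀ y ∈ A, ℓ ⬝ᵥ x ≤ ℓ ⬝ᵥ y) (hz : z ∈ posTangentConeAt A x) :
    0 ≤ ℓ ⬝ᵥ z := by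
  let f := LinearMap.toContinuousLinearMap (dotProductBilin ℝ ℝ ℓ)
  have hmin : IsLocalMinOn f A x := IsMinOn.localize fun y hy => by simpa [f] using hA y hy
  simpa [f] using hmin.hasFDerivWithinAt_nonneg f.hasFDerivWithinAt hz

theorem norm_le_sqrt_sum_sq {ι : Type*} [Fintype ι] (v : ι → ℝ) : ‖v‖ ≤ √(∑ k, v k ^ 2) := by
  refine (pi_norm_le_iff_of_nonneg (Real.sqrt_nonneg _)).2 fun k => ?_
  rw [Real.norm_eq_abs, ← Real.sqrt_sq_eq_abs]
  exact Real.sqrt_le_sqrt (Finset.single_le_sum (fun k _ => sq_nonneg (v k)) (Finset.mem_univ k))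

section EuclideanInfDist

variable {n : ℕ} {A : Set (Fin n → ℝ)} {x y : Fin n → ℝ}

theorem eInfDist_le_of_mem (hy : y ∈ A) : eInfDist x A ≤ √(∑ k, (x k - y k) ^ 2) :=
  csInf_le ⟨0, by rintro _ ⟨w, _, rfl⟩; exact Real.sqrt_nonneg _⟩ ⟨y, hy, rfl⟩

theorem eInfDist_eq_zero_of_mem (hx : x ∈ A) : eInfDist x A = 0 :=
  le_antisymm (by simpa using eInfDist_le_of_mem (x := x) hx)
    (Real.sInf_nonneg (by rintro _ ⟨w, _, rfl⟩; exact Real.sqrt_nonneg _))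

theorem exists_sqrt_lt_of_eInfDist_lt (hA : A.Nonempty) {c : ℝ} (h : eInfDist x A < c) :
    ∃ y ∈ A, √(∑ k, (x k - y k) ^ 2) < c := by
  obtain ⟨_, ⟨y, hy, rfl⟩, hlt⟩ := exists_lt_of_csInf_lt (hA.image _) h
  exact ⟨y, hy, hlt⟩

end EuclideanInfDist

theorem eInfDist_add_smul_div_le {n : ℕ} {A : Set (Fin n → ℝ)} {x : Fin n → ℝ} (hx : x ∈ A)
    (z : Fin n → ℝ) {τ : ℝ} (hτ : 0 < τ) : eInfDist (x + τ • z) A / τ ≤ √(∑ k, z k ^ 2) := by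
  have hdist : ∑ k, ((x + τ • z) k - x k) ^ 2 = τ ^ 2 * ∑ k, z k ^ 2 := by
    simp [Finset.mul_sum, mul_pow]
  rw [div_le_iff₀ hτ, mul_comm]
  calc eInfDist (x + τ • z) A ≤ √(∑ k, ((x + τ • z) k - x k) ^ 2) := eInfDist_le_of_mem hx
    _ = τ * √(∑ k, z k ^ 2) := by rw [hdist, Real.sqrt_mul (sq_nonneg τ), Real.sqrt_sq hτ.le]

theorem mem_posTangentConeAt_of_mem_tangentCone {n : ℕ} {A : Set (Fin n → ℝ)} {x z : Fin n → ℝ}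
    (hx : x ∈ A) (hz : z ∈ tangentCone A x) : z ∈ posTangentConeAt A x := by
  have hfreq (ε : ℝ) (hε : 0 < ε) : ∃ᶠ τ in 𝓝[>] 0, eInfDist (x + τ • z) A / τ < ε := by
    refine frequently_lt_of_liminf_lt (IsBoundedUnder.isCoboundedUnder_ge ?_) (hz.symm ▸ hε)
    exact isBoundedUnder_of_eventually_le
      (eventually_mem_nhdsWithin.mono fun τ hτ => eInfDist_add_smul_div_le hx z hτ)
  have hseq (k : ℕ) : ∃ τ : ℝ, 0 < τ ∧ τ ≤ 1 / (k + 1) ∧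
      ∃ y ∈ A, ‖τ⁻¹ • (y - x) - z‖ ≤ 1 / (k + 1) := by
    have hk : (0 : ℝ) < 1 / (k + 1) := by positivity
    obtain ⟨τ, hτ, hτ0, hτk⟩ := ((hfreq _ hk).and_eventually (Ioo_mem_nhdsGT hk)).exists
    obtain ⟨y, hyA, hy⟩ := exists_sqrt_lt_of_eInfDist_lt ⟨x, hx⟩ ((div_lt_iff₀ hτ0).1 hτ)
    refine ⟨τ, hτ0, hτk.le, y, hyA, ?_⟩
    have : τ⁻¹ • (y - x) - z = -(τ⁻¹ • ((x + τ • z) - y)) := by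
      simp only [smul_sub, smul_add, inv_smul_smul₀ hτ0.ne']; abel
    rw [this, norm_neg, norm_smul, norm_inv, Real.norm_of_nonneg hτ0.le, inv_mul_le_iff₀ hτ0,
      mul_comm]
    exact (norm_le_sqrt_sum_sq _).trans hy.le
  choose τ hτ0 hτ y hyA hy using hseq
  have hτlim : Tendsto τ atTop (𝓝 0) :=
    squeeze_zero (fun k => (hτ0 k).le) hτ tendsto_one_div_add_atTop_nhds_zero_nat
  have hlim : Tendsto (fun k => (τ k)⁻¹ • (y k - x)) atTop (𝓝 z) :=
    tendsto_iff_norm_sub_tendsto_zero.2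
      (squeeze_zero (fun _ => norm_nonneg _) hy tendsto_one_div_add_atTop_nhds_zero_nat)
  refine mem_tangentConeAt_iff_exists_seq.2
    ⟨fun k => (τ k)⁻¹.toNNReal, fun k => y k - x, ?_, ?_, ?_⟩
  · simpa [smul_inv_smul₀ (hτ0 _).ne'] using hτlim.smul hlim
  · exact Eventually.of_forall fun k => by simpa using hyA k
  · simpa [NNReal.smul_def, Real.coe_toNNReal _ (inv_nonneg.2 (hτ0 _).le)] using hlim

theorem mem_tangentCone_of_eventually_mem {n : ℕ} {A : Set (Fin n → ℝ)} {x z : Fin n → ℝ}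
    (h : ∀ᶠ τ : ℝ in 𝓝[>] 0, x + τ • z ∈ A) : z ∈ tangentCone A x := by
  show liminf _ _ = 0
  rw [liminf_congr (v := fun _ => 0) (h.mono fun τ hτ => by simp [eInfDist_eq_zero_of_mem hτ])]
  exact liminf_const 0

theorem eventually_nonneg_add_mul {a c : ℝ} (ha : 0 ≤ a) (hc : a = 0 → 0 ≤ c) :
    ∀ᶠ τ : ℝ in 𝓝[>] 0, 0 ≤ a + τ * c := by
  rcases ha.eq_or_lt with rfl | ha
  · exact eventually_mem_nhdsWithin.mono fun τ hτ => by
      simpa using mul_nonneg (le_of_lt hτ) (hc rfl)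
  · have : Tendsto (fun τ => a + τ * c) (𝓝 0) (𝓝 a) := by
      simpa using ((tendsto_id (x := 𝓝 (0 : ℝ))).mul_const c).const_add a
    exact nhdsWithin_le_nhds ((this.eventually (lt_mem_nhds ha)).mono fun _ => le_of_lt)

theorem eventually_add_mul_nonpos {a c : ℝ} (ha : a ≤ 0) (hc : a = 0 → c ≤ 0) :
    ∀ᶠ τ : ℝ in 𝓝[>] 0, a + τ * c ≤ 0 :=
  (eventually_nonneg_add_mul (neg_nonneg.2 ha) fun h => neg_nonneg.2 (hc (neg_eq_zero.1 h))).mono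
    fun τ hτ => by linarith

theorem dotProduct_affine {R ι κ : Type*} [CommSemiring R] [Fintype ι] [Fintype κ] (w : ι → R)
    (M : ι → κ → R) (c : ι → R) (x : κ → R) :
    w ⬝ᵥ (fun j => M j ⬝ᵥ x + c j) = (fun k => ∑ j, w j * M j k) ⬝ᵥ x + w ⬝ᵥ c := by
  simp only [dotProduct, mul_add, Finset.sum_add_distrib, Finset.mul_sum, Finset.sum_mul, mul_assoc]
  rw [Finset.sum_comm]

namespace ReluNet

variable (N : ReluNet)

theorem continuous_z (i : ℕ) : Continuous (N.z i) := by
  induction i with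
  | zero => exact continuous_id
  | succ i ih =>
    exact continuous_pi fun j => continuous_const.max <|
      (continuous_finsetSum _ fun k _ => continuous_const.mul ((continuous_apply k).comp ih)).add
        continuous_const

theorem continuous_pre (i : ℕ) (j : Fin (N.d (i + 1))) : Continuous (N.pre i j) :=
  (continuous_finsetSum _ fun k _ =>
    continuous_const.mul ((continuous_apply k).comp (N.continuous_z i))).add continuous_const

theorem continuous_b : Continuous N.b :=
  (continuous_finsetSum _ fun k _ =>
    continuous_const.mul ((continuous_apply k).comp (N.continuous_z N.L))).add continuous_const

theorem pre_eq (i : ℕ) (j : Fin (N.d (i + 1))) (x : Fin (N.d 0) → ℝ) :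
    N.pre i j x = N.W i j ⬝ᵥ N.z i x + N.r i j := rfl

theorem b_eq (x : Fin (N.d 0) → ℝ) : N.b x = N.Ω ⬝ᵥ N.z N.L x + N.ψ := rfl

-- `N.region S` is `N.regionUpTo S N.L` by definition.
def regionUpTo (S : N.ActSet) (m : ℕ) : Set (Fin (N.d 0) → ℝ) :=
  {x | ∀ i < m, ∀ j : Fin (N.d (i + 1)),
      (j ∈ S i → 0 ≤ N.pre i j x) ∧ (j ∉ S i → N.pre i j x ≤ 0)}

theorem regionUpTo_anti (S : N.ActSet) {m m' : ℕ} (h : m ≤ m') :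
    N.regionUpTo S m' ⊆ N.regionUpTo S m :=
  fun _ hx i hi => hx i (lt_of_lt_of_le hi h)

theorem pre_eq_of_z_eq {S : N.ActSet} {i : ℕ} {x : Fin (N.d 0) → ℝ}
    (h : N.z i x = fun j => N.Wbar S i j ⬝ᵥ x + N.rbar S i j) (j : Fin (N.d (i + 1))) :
    N.pre i j x = N.gradW S i j ⬝ᵥ x + (N.W i j ⬝ᵥ N.rbar S i + N.r i j) := by
  rw [pre_eq, h, dotProduct_affine, add_assoc]
  rfl

theorem z_eq_of_mem_regionUpTo {S : N.ActSet} {i : ℕ} {x : Fin (N.d 0) → ℝ}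
    (hx : x ∈ N.regionUpTo S i) : N.z i x = fun j => N.Wbar S i j ⬝ᵥ x + N.rbar S i j := by
  induction i with
  | zero => ext k; simp [z, Wbar, rbar, dotProduct]
  | succ i ih =>
    ext j
    have hpre := N.pre_eq_of_z_eq (ih (N.regionUpTo_anti S i.le_succ hx)) j
    have hsign := hx i i.lt_succ_self j
    show max 0 (N.pre i j x) = _
    by_cases hj : j ∈ S i
    · rw [max_eq_right (hsign.1 hj), hpre]
      simp only [Wbar, rbar, hj, if_true]
      rfl
    · rw [max_eq_left (hsign.2 hj)]
      simp [Wbar, rbar, hj]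

theorem pre_sub_pre {S : N.ActSet} {i : ℕ} {x y : Fin (N.d 0) → ℝ}
    (hx : x ∈ N.regionUpTo S i) (hy : y ∈ N.regionUpTo S i) (j : Fin (N.d (i + 1))) :
    N.pre i j y - N.pre i j x = N.gradW S i j ⬝ᵥ (y - x) := by
  rw [N.pre_eq_of_z_eq (N.z_eq_of_mem_regionUpTo hy),
    N.pre_eq_of_z_eq (N.z_eq_of_mem_regionUpTo hx), dotProduct_sub]
  ring

theorem b_sub_b {S : N.ActSet} {x y : Fin (N.d 0) → ℝ} (hx : x ∈ N.region S)
    (hy : y ∈ N.region S) : N.b y - N.b x = N.WbarOut S ⬝ᵥ (y - x) := by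
  have hb (v) (hv : v ∈ N.region S) : N.b v = N.WbarOut S ⬝ᵥ v + N.rbarOut S := by
    rw [b_eq, N.z_eq_of_mem_regionUpTo hv, dotProduct_affine, add_assoc]
    rfl
  rw [hb y hy, hb x hx, dotProduct_sub]
  ring

theorem isClosed_regionUpTo (S : N.ActSet) (m : ℕ) : IsClosed (N.regionUpTo S m) := by
  simp only [regionUpTo, ofPred_forall]
  refine isClosed_iInter fun i => isClosed_iInter fun _ => isClosed_iInter fun j => ?_
  by_cases hj : j ∈ S i
  · simpa [hj] using isClosed_le continuous_const (N.continuous_pre i j)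
  · simpa [hj] using isClosed_le (N.continuous_pre i j) continuous_const

theorem mem_regionUpTo_succ {S : N.ActSet} {m : ℕ} {x : Fin (N.d 0) → ℝ} :
    x ∈ N.regionUpTo S (m + 1) ↔ x ∈ N.regionUpTo S m ∧
      ∀ j, (j ∈ S m → 0 ≤ N.pre m j x) ∧ (j ∉ S m → N.pre m j x ≤ 0) := by
  simp only [regionUpTo, mem_ofPred_eq, Nat.lt_succ_iff_lt_or_eq, or_imp, forall_and,
    forall_eq]
  exact and_and_and_comm

def regionCone (S : N.ActSet) (x : Fin (N.d 0) → ℝ) : Set (Fin (N.d 0) → ℝ) :=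
  (⋂ i ∈ Finset.range N.L, ⋂ j ∈ {j : Fin (N.d (i + 1)) | N.pre i j x = 0 ∧ j ∈ S i},
      {z | 0 ≤ N.gradW S i j ⬝ᵥ z}) ∩
    (⋂ i ∈ Finset.range N.L, ⋂ j ∈ {j : Fin (N.d (i + 1)) | N.pre i j x = 0 ∧ j ∉ S i},
      {z | N.gradW S i j ⬝ᵥ z ≤ 0})

theorem mem_regionCone {S : N.ActSet} {x z : Fin (N.d 0) → ℝ} :
    z ∈ N.regionCone S x ↔ ∀ i < N.L, ∀ j, N.pre i j x = 0 →
      (j ∈ S i → 0 ≤ N.gradW S i j ⬝ᵥ z) ∧ (j ∉ S i → N.gradW S i j ⬝ᵥ z ≤ 0) := by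
  simp only [regionCone, mem_inter_iff, mem_iInter, Finset.mem_range, mem_ofPred_eq, and_imp,
    ← forall_and]

theorem eventually_add_smul_mem_region {S : N.ActSet} {x z : Fin (N.d 0) → ℝ}
    (hx : x ∈ N.region S) (hz : z ∈ N.regionCone S x) :
    ∀ᶠ τ : ℝ in 𝓝[>] 0, x + τ • z ∈ N.region S := by
  rw [mem_regionCone] at hz
  suffices ∀ m ≤ N.L, ∀ᶠ τ : ℝ in 𝓝[>] 0, x + τ • z ∈ N.regionUpTo S m from this N.L le_rfl
  intro m hm
  induction m with
  | zero => exact Eventually.of_forall fun τ i hi => absurd hi (Nat.not_lt_zero i)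
  | succ m ih =>
    have hmL : m < N.L := hm
    have hlayer (j : Fin (N.d (m + 1))) : ∀ᶠ τ : ℝ in 𝓝[>] 0,
        (j ∈ S m → 0 ≤ N.pre m j x + τ * (N.gradW S m j ⬝ᵥ z)) ∧
        (j ∉ S m → N.pre m j x + τ * (N.gradW S m j ⬝ᵥ z) ≤ 0) := by
      by_cases hj : j ∈ S m
      · filter_upwards [eventually_nonneg_add_mul ((hx m hmL j).1 hj)
          fun h0 => (hz m hmL j h0).1 hj] with τ hτ
        simp [hj, hτ]
      · filter_upwards [eventually_add_mul_nonpos ((hx m hmL j).2 hj)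
          fun h0 => (hz m hmL j h0).2 hj] with τ hτ
        simp [hj, hτ]
    filter_upwards [ih hmL.le, eventually_all.2 hlayer] with τ hτ hτlayer
    refine N.mem_regionUpTo_succ.2 ⟨hτ, fun j => ?_⟩
    have hpre := N.pre_sub_pre (N.regionUpTo_anti S hmL.le hx) hτ j
    rw [add_sub_cancel_left, dotProduct_smul, smul_eq_mul] at hpre
    rw [show N.pre m j (x + τ • z) = N.pre m j x + τ * (N.gradW S m j ⬝ᵥ z) by linarith]
    exact hτlayer j

theorem posTangentConeAt_region_subset_regionCone {S : N.ActSet} {x : Fin (N.d 0) → ℝ}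
    (hx : x ∈ N.region S) : posTangentConeAt (N.region S) x ⊆ N.regionCone S x := by
  intro z hz
  rw [mem_regionCone]
  intro i hi j h0
  have hpre (y) (hy : y ∈ N.region S) : N.pre i j y = N.gradW S i j ⬝ᵥ y - N.gradW S i j ⬝ᵥ x := by
    rw [← dotProduct_sub, ← N.pre_sub_pre (N.regionUpTo_anti S hi.le hx)
      (N.regionUpTo_anti S hi.le hy), h0, sub_zero]
  constructor
  · refine fun hj => dotProduct_nonneg_of_mem_posTangentConeAt (fun y hy => ?_) hz
    linarith [hpre y hy, (hy i hi j).1 hj]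
  · refine fun hj => neg_nonneg.1 ?_
    rw [← neg_dotProduct]
    refine dotProduct_nonneg_of_mem_posTangentConeAt (fun y hy => ?_) hz
    simp only [neg_dotProduct]
    linarith [hpre y hy, (hy i hi j).2 hj]

theorem WbarOut_dotProduct_nonneg {S : N.ActSet} {x z : Fin (N.d 0) → ℝ} (hx : x ∈ N.region S)
    (hbx : N.b x = 0) (hz : z ∈ posTangentConeAt ({y | 0 ≤ N.b y} ∩ N.region S) x) :
    0 ≤ N.WbarOut S ⬝ᵥ z := by
  refine dotProduct_nonneg_of_mem_posTangentConeAt (fun y hy => ?_) hz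
  have := N.b_sub_b hx hy.2
  rw [dotProduct_sub] at this
  linarith [hy.1.out]

-- Only the first `L` layers of an activation set matter; indexing by them gives a finite type.
def ofLayers (P : (i : Fin N.L) → Set (Fin (N.d (i + 1)))) : N.ActSet :=
  fun i => if h : i < N.L then P ⟨i, h⟩ else ∅

theorem exists_mem_region_ofLayers (y : Fin (N.d 0) → ℝ) :
    ∃ P, y ∈ N.region (N.ofLayers P) :=
  ⟨fun i => {j | 0 ≤ N.pre i j y}, fun i hi j => by simpa [ofLayers, hi] using le_of_lt⟩

theorem exists_mem_regionCone_of_mem_tangentCone {x z : Fin (N.d 0) → ℝ} (hbx : N.b x = 0)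
    (hz : z ∈ tangentCone {y | 0 ≤ N.b y} x) :
    ∃ S, x ∈ N.region S ∧ z ∈ N.regionCone S x ∧ 0 ≤ N.WbarOut S ⬝ᵥ z := by
  set D := {y : Fin (N.d 0) → ℝ | 0 ≤ N.b y}
  have hcover : D ⊆ ⋃ P, D ∩ N.region (N.ofLayers P) := fun y hy =>
    mem_iUnion.2 ((N.exists_mem_region_ofLayers y).imp fun _ h => ⟨hy, h⟩)
  obtain ⟨P, hP⟩ := mem_iUnion.1 (tangentConeAt_iUnion_subset _
    (posTangentConeAt_mono hcover (mem_posTangentConeAt_of_mem_tangentCone hbx.symm.le hz)))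
  have hxS : x ∈ N.region (N.ofLayers P) := (N.isClosed_regionUpTo _ N.L).closure_subset
    (closure_mono inter_subset_right (mem_closure_of_nonempty_tangentConeAt ⟨z, hP⟩))
  exact ⟨_, hxS, N.posTangentConeAt_region_subset_regionCone hxS
    (posTangentConeAt_mono inter_subset_right hP), N.WbarOut_dotProduct_nonneg hxS hbx hP⟩

theorem mem_tangentCone_of_mem_regionCone {S : N.ActSet} {x z : Fin (N.d 0) → ℝ}
    (hbx : N.b x = 0) (hx : x ∈ N.region S) (hz : z ∈ N.regionCone S x)
    (hzb : 0 ≤ N.WbarOut S ⬝ᵥ z) : z ∈ tangentCone {y | 0 ≤ N.b y} x := by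
  refine mem_tangentCone_of_eventually_mem ?_
  filter_upwards [N.eventually_add_smul_mem_region hx hz, eventually_mem_nhdsWithin]
    with τ hτS hτ
  have hb := N.b_sub_b hx hτS
  rw [add_sub_cancel_left, dotProduct_smul, smul_eq_mul, hbx, sub_zero] at hb
  show 0 ≤ N.b (x + τ • z)
  exact hb ▸ mul_nonneg (le_of_lt hτ) hzb

end ReluNet

open ReluNet in
/-- Proposition 2. For `x` on the boundary of `D = {y : b(y) ≥ 0}`,
`T_D(x) = ∪_{S ∈ S(x)} [ (∩_{(i,j) ∈ T(x), j ∈ S_i} {z : (W̄_{i-1}(S) W_{ij})·z ≥ 0}) ∩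
(∩_{(i,j) ∈ T(x), j ∉ S_i} {z : (W̄_{i-1}(S) W_{ij})·z ≤ 0}) ∩ {z : W̄(S)·z ≥ 0} ]`,
where `T(x)` is the set of neurons with zero pre-activation at `x` and `W̄_0(S) = I`.
(Paper layer `i` corresponds to index `i - 1 ∈ range L`, so `W̄_{i-1}(S) W_{ij}` is
`N.gradW S i j`.) -/
theorem stmt6 (N : ReluNet) (x : Fin (N.d 0) → ℝ)
    (hx : x ∈ frontier {y : Fin (N.d 0) → ℝ | 0 ≤ N.b y}) :
    tangentCone {y : Fin (N.d 0) → ℝ | 0 ≤ N.b y} x =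
      ⋃ S ∈ {S : N.ActSet | x ∈ N.region S},
        ((⋂ i ∈ Finset.range N.L,
            ⋂ j ∈ {j : Fin (N.d (i + 1)) | N.pre i j x = 0 ∧ j ∈ S i},
              {z : Fin (N.d 0) → ℝ | 0 ≤ ∑ k, N.gradW S i j k * z k}) ∩
         (⋂ i ∈ Finset.range N.L,
            ⋂ j ∈ {j : Fin (N.d (i + 1)) | N.pre i j x = 0 ∧ j ∉ S i},
              {z : Fin (N.d 0) → ℝ | (∑ k, N.gradW S i j k * z k) ≤ 0}) ∩
         {z : Fin (N.d 0) → ℝ | 0 ≤ ∑ k, N.WbarOut S k * z k}) := by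
  change _ = ⋃ S ∈ {S : N.ActSet | x ∈ N.region S},
    N.regionCone S x ∩ {z | 0 ≤ N.WbarOut S ⬝ᵥ z}
  have hbx : N.b x = 0 := (frontier_le_subset_eq continuous_const N.continuous_b hx).symm
  ext z
  simp only [mem_iUnion, mem_inter_iff, mem_ofPred_eq, exists_prop]
  exact ⟨N.exists_mem_regionCone_of_mem_tangentCone hbx,
    fun ⟨_, hxS, hzS, hzb⟩ => N.mem_tangentCone_of_mem_regionCone hbx hxS hzS hzb⟩
end

section
/- Suppose x ∈ ∂D and T(x) = ∅ (no neuron has zero pre-activation input at x). Then S(x) consists of a single activation set S, and for any F ∈ ℝ^n and G ∈ ℝ^{n×m} the following are equivalent: (1) there exists u ∈ ℝ^m with F + Gu ∈ T_D(x); (2) it is not the case that both G^T W̄(S) = 0 and W̄(S)·F < 0. -/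
namespace ReluNet

open Classical

-- my lemmas
lemma z_continuous (N : ReluNet) (i : ℕ) : ∀ j : Fin (N.d i), Continuous fun x => N.z i x j := by
  induction i with
  | zero => exact fun j => continuous_apply j
  | succ i ih =>
    intro j
    show Continuous fun x => max 0 ((∑ k, N.W i j k * N.z i x k) + N.r i j)
    exact continuous_const.max ((continuous_finset_sum _ fun k _ =>
      continuous_const.mul (ih k)).add continuous_const)

lemma pre_continuous (N : ReluNet) (i : ℕ) (j : Fin (N.d (i + 1))) :
    Continuous fun x => N.pre i j x :=
  (continuous_finset_sum _ fun k _ => continuous_const.mul (N.z_continuous i k)).add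
    continuous_const

lemma b_continuous (N : ReluNet) : Continuous N.b :=
  (continuous_finset_sum _ fun j _ => continuous_const.mul (N.z_continuous N.L j)).add
    continuous_const

lemma z_eq_affine (N : ReluNet) (S : N.ActSet) {y : Fin (N.d 0) → ℝ} (hy : y ∈ N.region S) :
    ∀ i ≤ N.L, ∀ j : Fin (N.d i),
      N.z i y j = (∑ k, N.Wbar S i j k * y k) + N.rbar S i j := by
  intro i
  induction i with
  | zero =>
    intro _ j
    simp [z, Wbar, rbar, Finset.sum_ite_eq' Finset.univ j (fun k => y k)]
  | succ i ih =>
    intro hiL j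
    have hi : i < N.L := Nat.lt_of_succ_le hiL
    have hpre : N.pre i j y = (∑ k, (∑ j', N.W i j j' * N.Wbar S i j' k) * y k) +
        ((∑ j', N.W i j j' * N.rbar S i j') + N.r i j) := by
      unfold pre
      rw [Finset.sum_congr rfl fun j' _ => by rw [ih (le_of_lt hi) j']]
      simp only [mul_add, Finset.sum_add_distrib, Finset.mul_sum, Finset.sum_mul]
      rw [Finset.sum_comm]
      ring_nf
    show max 0 (N.pre i j y) = _
    by_cases hjS : j ∈ S i
    · have h0 : 0 ≤ N.pre i j y := (hy i hi j).1 hjS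
      rw [max_eq_right h0, hpre]
      simp [Wbar, rbar, hjS]
    · have h0 : N.pre i j y ≤ 0 := (hy i hi j).2 hjS
      rw [max_eq_left h0]
      simp [Wbar, rbar, hjS]

lemma b_eq_affine (N : ReluNet) (S : N.ActSet) {y : Fin (N.d 0) → ℝ} (hy : y ∈ N.region S) :
    N.b y = (∑ k, N.WbarOut S k * y k) + N.rbarOut S := by
  unfold b WbarOut rbarOut
  rw [Finset.sum_congr rfl fun j _ => by rw [N.z_eq_affine S hy N.L le_rfl j]]
  simp only [mul_add, Finset.sum_add_distrib, Finset.mul_sum, Finset.sum_mul]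
  rw [Finset.sum_comm]
  ring_nf

lemma exists_open_subset_region (N : ReluNet) (S : N.ActSet) (x : Fin (N.d 0) → ℝ)
    (hx : x ∈ N.region S) (hT : ∀ i < N.L, ∀ j : Fin (N.d (i + 1)), N.pre i j x ≠ 0) :
    ∃ U : Set (Fin (N.d 0) → ℝ), IsOpen U ∧ x ∈ U ∧ U ⊆ N.region S := by
  refine ⟨⋂ i ∈ Finset.range N.L, ⋂ j : Fin (N.d (i + 1)),
    (if j ∈ S i then {y | 0 < N.pre i j y} else {y | N.pre i j y < 0}), ?_, ?_, ?_⟩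
  · refine isOpen_biInter_finset fun i _ => isOpen_iInter_of_finite fun j => ?_
    split_ifs
    · exact isOpen_lt continuous_const (N.pre_continuous i j)
    · exact isOpen_lt (N.pre_continuous i j) continuous_const
  · simp only [Set.mem_iInter, Finset.mem_range]
    intro i hi j
    split_ifs with hjS
    · exact lt_of_le_of_ne ((hx i hi j).1 hjS) (Ne.symm (hT i hi j))
    · exact lt_of_le_of_ne ((hx i hi j).2 hjS) (hT i hi j)
  · intro y hy
    simp only [Set.mem_iInter, Finset.mem_range] at hy
    intro i hi j
    have := hy i hi j
    split_ifs at this with hjS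
    · exact ⟨fun _ => le_of_lt this, fun h => absurd hjS h⟩
    · exact ⟨fun h => absurd h hjS, fun _ => le_of_lt this⟩


end ReluNet

lemma eInfDist_nonneg {n : ℕ} (x : Fin n → ℝ) (A : Set (Fin n → ℝ)) (hA : A.Nonempty) :
    0 ≤ eInfDist x A :=
  le_csInf (hA.image _) (by rintro _ ⟨y, -, rfl⟩; exact Real.sqrt_nonneg _)

lemma eInfDist_le {n : ℕ} (x y : Fin n → ℝ) (A : Set (Fin n → ℝ)) (hy : y ∈ A) :
    eInfDist x A ≤ Real.sqrt (∑ k, (x k - y k) ^ 2) :=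
  csInf_le ⟨0, by rintro _ ⟨z, -, rfl⟩; exact Real.sqrt_nonneg _⟩ ⟨y, hy, rfl⟩

lemma eInfDist_zero_of_mem {n : ℕ} (x : Fin n → ℝ) (A : Set (Fin n → ℝ)) (hx : x ∈ A) :
    eInfDist x A = 0 := by
  refine le_antisymm ?_ (eInfDist_nonneg x A ⟨x, hx⟩)
  have := eInfDist_le x x A hx
  simpa using this

lemma le_eInfDist {n : ℕ} {x : Fin n → ℝ} {A : Set (Fin n → ℝ)} (hA : A.Nonempty) {c : ℝ}
    (h : ∀ y ∈ A, c ≤ Real.sqrt (∑ k, (x k - y k) ^ 2)) : c ≤ eInfDist x A :=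
  le_csInf (hA.image _) (by rintro _ ⟨y, hy, rfl⟩; exact h y hy)

open Filter in
lemma mem_tangentCone_of_eventually {n : ℕ} {A : Set (Fin n → ℝ)} {x v : Fin n → ℝ}
    (h : ∀ᶠ τ : ℝ in nhdsWithin 0 (Set.Ioi 0), x + τ • v ∈ A) :
    v ∈ tangentCone A x := by
  have : ∀ᶠ τ : ℝ in nhdsWithin 0 (Set.Ioi 0),
      eInfDist (x + τ • v) A / τ = (0 : ℝ) := by
    filter_upwards [h] with τ hτ
    rw [eInfDist_zero_of_mem _ _ hτ, zero_div]
  rw [tangentCone, Set.mem_setOf_eq, Filter.liminf_congr this, Filter.liminf_const]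

open Filter in
lemma notMem_tangentCone {n : ℕ} {A U : Set (Fin n → ℝ)} {x v w : Fin n → ℝ} {ρ : ℝ}
    (hU : IsOpen U) (hxU : x ∈ U)
    (hAU : ∀ y ∈ A ∩ U, 0 ≤ (∑ k, w k * y k) + ρ)
    (hxA : x ∈ A)
    (hx0 : (∑ k, w k * x k) + ρ = 0)
    (hv : (∑ k, w k * v k) < 0) :
    v ∉ tangentCone A x := by
  obtain ⟨ε, hε, hball⟩ := Metric.isOpen_iff.1 hU x hxU
  set a : ℝ := -(∑ k, w k * v k) with ha_def
  have ha : 0 < a := by simpa [ha_def] using hv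
  set Wn : ℝ := Real.sqrt (∑ k, w k ^ 2) with hWn_def
  have hWn : 0 < Wn := by
    rcases eq_or_lt_of_le (Finset.sum_nonneg fun k _ => sq_nonneg (w k)) with h | h
    · exfalso
      have hw0 : ∀ k, w k = 0 := by
        intro k
        have := Finset.sum_eq_zero_iff_of_nonneg (fun k (_ : k ∈ Finset.univ) =>
          sq_nonneg (w k)) |>.1 h.symm k (Finset.mem_univ k)
        exact pow_eq_zero_iff (n := 2) (by norm_num) |>.1 this
      simp [hw0] at hv
    · exact Real.sqrt_pos.2 h
  set c : ℝ := a / Wn with hc_def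
  have hc : 0 < c := div_pos ha hWn
  set Vs : ℝ := Real.sqrt (∑ k, v k ^ 2) with hVs_def
  have hVs : 0 ≤ Vs := Real.sqrt_nonneg _
  set τ₀ : ℝ := min (ε / (2 * (Vs + 1))) (ε / (2 * c)) with hτ₀_def
  have hτ₀ : 0 < τ₀ := lt_min (div_pos hε (by linarith)) (div_pos hε (by linarith))
  -- main lower bound
  have key : ∀ τ ∈ Set.Ioo (0:ℝ) τ₀, c ≤ eInfDist (x + τ • v) A / τ := by
    intro τ ⟨hτpos, hττ₀⟩
    have hτc : τ * c ≤ ε / 2 := by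
      have h1 : τ ≤ ε / (2 * c) := le_of_lt (lt_of_lt_of_le hττ₀ (min_le_right _ _))
      calc τ * c ≤ (ε / (2 * c)) * c := by nlinarith
        _ = ε / 2 := by field_simp
    have hτVs : τ * Vs ≤ ε / 2 := by
      have h1 : τ ≤ ε / (2 * (Vs + 1)) := le_of_lt (lt_of_lt_of_le hττ₀ (min_le_left _ _))
      have h2 : τ * (Vs + 1) ≤ ε / 2 := by
        calc τ * (Vs + 1) ≤ (ε / (2 * (Vs + 1))) * (Vs + 1) := by nlinarith
          _ = ε / 2 := by field_simp
      nlinarith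
    set p : Fin n → ℝ := x + τ • v with hp_def
    have hpk : ∀ k, p k = x k + τ * v k := fun k => rfl
    have hElow : ∀ y ∈ A, τ * c ≤ Real.sqrt (∑ k, (p k - y k) ^ 2) := by
      intro y hyA
      set E : ℝ := Real.sqrt (∑ k, (p k - y k) ^ 2) with hE_def
      have hE0 : 0 ≤ E := Real.sqrt_nonneg _
      by_cases hyU : dist y x < ε
      · -- y in the ball, hence in U
        have hyU' : y ∈ U := hball (by simpa [Metric.mem_ball] using hyU)
        have hby : 0 ≤ (∑ k, w k * y k) + ρ := hAU y ⟨hyA, hyU'⟩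
        have hwp : (∑ k, w k * p k) = (∑ k, w k * x k) + τ * (∑ k, w k * v k) := by
          simp only [hpk, mul_add]
          rw [Finset.sum_add_distrib, Finset.mul_sum]
          congr 1
          exact Finset.sum_congr rfl fun k _ => by ring
        have hkey : τ * a ≤ ∑ k, w k * (y k - p k) := by
          have hsplit : (∑ k, w k * (y k - p k)) =
              (∑ k, w k * y k) - (∑ k, w k * p k) := by
            rw [← Finset.sum_sub_distrib]
            exact Finset.sum_congr rfl fun k _ => by ring
          rw [hsplit, hwp]
          have hτa' : τ * a = - (τ * (∑ k, w k * v k)) := by rw [ha_def]; ring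
          linarith
        -- Cauchy-Schwarz
        have hCS : (∑ k, w k * (y k - p k)) ^ 2 ≤
            (∑ k, w k ^ 2) * (∑ k, (y k - p k) ^ 2) :=
          Finset.sum_mul_sq_le_sq_mul_sq _ _ _
        have hsum_eq : (∑ k, (y k - p k) ^ 2) = ∑ k, (p k - y k) ^ 2 := by
          apply Finset.sum_congr rfl; intro k _; ring
        have hτa : 0 ≤ τ * a := le_of_lt (mul_pos hτpos ha)
        have h1 : τ * a ≤ Wn * E := by
          have h2 : (τ * a) ^ 2 ≤ (Wn * E) ^ 2 := by
            have hWnE : (Wn * E) ^ 2 = (∑ k, w k ^ 2) * (∑ k, (p k - y k) ^ 2) := by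
              rw [mul_pow, hWn_def, hE_def, Real.sq_sqrt (Finset.sum_nonneg fun k _ =>
                sq_nonneg _), Real.sq_sqrt (Finset.sum_nonneg fun k _ => sq_nonneg _)]
            rw [hWnE, ← hsum_eq]
            calc (τ * a) ^ 2 ≤ (∑ k, w k * (y k - p k)) ^ 2 :=
                pow_le_pow_left₀ hτa hkey 2
              _ ≤ _ := hCS
          have h3 := Real.sqrt_le_sqrt h2
          rwa [Real.sqrt_sq hτa, Real.sqrt_sq (mul_nonneg (le_of_lt hWn) hE0)] at h3
        have hcc : τ * c = τ * a / Wn := by rw [hc_def]; ring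
        rw [hcc, div_le_iff₀ hWn]
        calc τ * a ≤ Wn * E := h1
          _ = E * Wn := mul_comm _ _
      · -- y far away
        push_neg at hyU
        have hdistxy : ε ≤ dist x y := by rwa [dist_comm]
        have hdxp : dist x p ≤ τ * Vs := by
          rw [dist_pi_le_iff (mul_nonneg (le_of_lt hτpos) hVs)]
          intro k
          rw [Real.dist_eq, hpk]
          have : |x k - (x k + τ * v k)| = τ * |v k| := by
            rw [abs_sub_comm]
            simp [abs_mul, abs_of_pos hτpos]
          rw [this]
          have : |v k| ≤ Vs := by
            rw [hVs_def, ← Real.sqrt_sq_eq_abs]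
            exact Real.sqrt_le_sqrt (Finset.single_le_sum (fun k _ => sq_nonneg (v k))
              (Finset.mem_univ k))
          nlinarith
        have hdpy : dist p y ≤ E := by
          rw [dist_pi_le_iff hE0]
          intro k
          rw [Real.dist_eq, ← Real.sqrt_sq_eq_abs]
          exact Real.sqrt_le_sqrt (Finset.single_le_sum
            (f := fun k => (p k - y k) ^ 2) (fun k _ => sq_nonneg _) (Finset.mem_univ k))
        have : ε - τ * Vs ≤ dist p y := by
          have := dist_triangle x p y
          have h2 : dist x y ≤ dist x p + dist p y := this
          linarith
        linarith
    have hεA : eInfDist p A / τ ≥ c := by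
      have h1 : τ * c ≤ eInfDist p A := le_eInfDist ⟨x, hxA⟩ hElow
      rw [ge_iff_le, le_div_iff₀ hτpos]
      linarith [h1]
    exact hεA
  -- upper bound for coboundedness
  have hub : ∀ᶠ τ : ℝ in nhdsWithin 0 (Set.Ioi 0),
      eInfDist (x + τ • v) A / τ ≤ Vs := by
    filter_upwards [self_mem_nhdsWithin] with τ (hτ : τ ∈ Set.Ioi 0)
    have hτpos : (0:ℝ) < τ := hτ
    have h1 : eInfDist (x + τ • v) A ≤ τ * Vs := by
      have := eInfDist_le (x + τ • v) x A hxA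
      have heq : Real.sqrt (∑ k, ((x + τ • v) k - x k) ^ 2) = τ * Vs := by
        have : ∀ k, ((x + τ • v) k - x k) ^ 2 = τ ^ 2 * v k ^ 2 := by
          intro k; show (x k + τ * v k - x k) ^ 2 = _; ring
        rw [Finset.sum_congr rfl fun k _ => this k, ← Finset.mul_sum,
          Real.sqrt_mul (sq_nonneg τ), Real.sqrt_sq (le_of_lt hτpos), hVs_def]
      rw [heq] at this
      exact this
    rw [div_le_iff₀ hτpos]
    linarith [h1]
  have hev : ∀ᶠ τ : ℝ in nhdsWithin 0 (Set.Ioi 0), c ≤ eInfDist (x + τ • v) A / τ := by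
    filter_upwards [Ioo_mem_nhdsGT_of_mem ⟨le_refl (0:ℝ), hτ₀⟩] with τ hτ
    exact key τ hτ
  intro hmem
  rw [tangentCone, Set.mem_setOf_eq] at hmem
  have : c ≤ Filter.liminf (fun τ : ℝ => eInfDist (x + τ • v) A / τ)
      (nhdsWithin 0 (Set.Ioi 0)) :=
    Filter.le_liminf_of_le (Filter.isCoboundedUnder_ge_of_eventually_le _ hub) hev
  rw [hmem] at this
  linarith

open ReluNet in
/-- unconstrained-input case, Corollary 1. If `x ∈ ∂D` and no neuron
has zero pre-activation at `x` (`T(x) = ∅`), then `S(x)` consists of a single activation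
set (unique on the meaningful layers `i < L`), and for that set `S` and any
`F ∈ ℝ^n`, `G ∈ ℝ^{n×m}`: there exists `u` with `F + Gu ∈ T_D(x)` iff it is not the case
that both `Gᵀ W̄(S) = 0` and `W̄(S)·F < 0`. -/
theorem stmt12 (N : ReluNet) {m : ℕ} (x : Fin (N.d 0) → ℝ)
    (hx : x ∈ frontier {y : Fin (N.d 0) → ℝ | 0 ≤ N.b y})
    (hT : ∀ i < N.L, ∀ j : Fin (N.d (i + 1)), N.pre i j x ≠ 0) :
    (∃ S : N.ActSet, x ∈ N.region S ∧
        ∀ S' : N.ActSet, x ∈ N.region S' → ∀ i < N.L, S' i = S i) ∧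
      (∀ S : N.ActSet, x ∈ N.region S →
        ∀ F : Fin (N.d 0) → ℝ, ∀ G : Fin (N.d 0) → Fin m → ℝ,
          ((∃ u : Fin m → ℝ,
              (fun k => F k + ∑ j, G k j * u j) ∈
                tangentCone {y : Fin (N.d 0) → ℝ | 0 ≤ N.b y} x) ↔
            ¬ ((∀ j, (∑ k, G k j * N.WbarOut S k) = 0) ∧
                (∑ k, N.WbarOut S k * F k) < 0))) := by
  set D := {y : Fin (N.d 0) → ℝ | 0 ≤ N.b y} with hD
  have hDclosed : IsClosed D := isClosed_le continuous_const N.b_continuous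
  have hxD : x ∈ D := hDclosed.closure_eq ▸ (frontier_subset_closure hx)
  have hxnotint : x ∉ interior D := fun h => hx.2 h
  have hbx : N.b x = 0 := by
    by_contra h
    have hpos : 0 < N.b x := lt_of_le_of_ne hxD (Ne.symm h)
    have hop : IsOpen {y | 0 < N.b y} := isOpen_lt continuous_const N.b_continuous
    have hsub : {y | 0 < N.b y} ⊆ D := fun y hy => show 0 ≤ N.b y from le_of_lt hy
    exact hxnotint (interior_maximal hsub hop hpos)
  constructor
  · -- existence and uniqueness of the activation set
    refine ⟨fun i => {j | 0 < N.pre i j x}, ?_, ?_⟩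
    · intro i hi j
      exact ⟨fun hj => le_of_lt hj, fun hj => le_of_not_gt hj⟩
    · intro S' hS' i hi
      ext j
      simp only [Set.mem_setOf_eq]
      constructor
      · intro hj
        exact lt_of_le_of_ne ((hS' i hi j).1 hj) (Ne.symm (hT i hi j))
      · intro hj
        by_contra hjn
        exact absurd (le_antisymm ((hS' i hi j).2 hjn) (le_of_lt hj)) (hT i hi j)
  · intro S hS F G
    set w : Fin (N.d 0) → ℝ := N.WbarOut S with hw_def
    set ρ : ℝ := N.rbarOut S with hρ_def
    obtain ⟨U, hUopen, hxU, hUsub⟩ := N.exists_open_subset_region S x hS hT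
    have hx0 : (∑ k, w k * x k) + ρ = 0 := by
      rw [← N.b_eq_affine S hS]; exact hbx
    have hAU : ∀ y ∈ D ∩ U, 0 ≤ (∑ k, w k * y k) + ρ := by
      intro y ⟨hyD, hyU⟩
      rw [← N.b_eq_affine S (hUsub hyU)]
      exact hyD
    -- membership side
    have hvmem : ∀ v : Fin (N.d 0) → ℝ, 0 ≤ ∑ k, w k * v k → v ∈ tangentCone D x := by
      intro v hv
      apply mem_tangentCone_of_eventually
      have hcont : Filter.Tendsto (fun τ : ℝ => x + τ • v) (nhds 0) (nhds x) := by
        have hc : Continuous fun τ : ℝ => x + τ • v := by continuity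
        simpa using hc.tendsto 0
      have hU' : ∀ᶠ τ : ℝ in nhdsWithin 0 (Set.Ioi 0), x + τ • v ∈ U :=
        (hcont.mono_left nhdsWithin_le_nhds).eventually (hUopen.mem_nhds hxU)
      filter_upwards [hU', self_mem_nhdsWithin] with τ hτU hτpos
      show 0 ≤ N.b (x + τ • v)
      rw [N.b_eq_affine S (hUsub hτU)]
      have hsum : (∑ k, w k * (x + τ • v) k) = (∑ k, w k * x k) + τ * ∑ k, w k * v k := by
        have : ∀ k, w k * (x + τ • v) k = w k * x k + τ * (w k * v k) := by
          intro k; show w k * (x k + τ * v k) = _; ring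
        rw [Finset.sum_congr rfl fun k _ => this k, Finset.sum_add_distrib, ← Finset.mul_sum]
      show 0 ≤ (∑ k, w k * (x + τ • v) k) + ρ
      rw [hsum]
      have : 0 ≤ τ * ∑ k, w k * v k :=
        mul_nonneg (le_of_lt (Set.mem_Ioi.1 hτpos)) hv
      linarith
    -- inner product rearrangement
    have hrearr : ∀ u : Fin m → ℝ,
        (∑ k, w k * (F k + ∑ j, G k j * u j)) =
          (∑ k, w k * F k) + ∑ j, (∑ k, G k j * w k) * u j := by
      intro u
      simp only [mul_add, Finset.sum_add_distrib]
      congr 1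
      simp only [Finset.mul_sum]
      rw [Finset.sum_comm]
      refine Finset.sum_congr rfl fun j _ => ?_
      rw [Finset.sum_mul]
      exact Finset.sum_congr rfl fun k _ => by ring
    constructor
    · rintro ⟨u, hu⟩ ⟨h1, h2⟩
      have hv : (∑ k, w k * (F k + ∑ j, G k j * u j)) < 0 := by
        rw [hrearr u]
        have hz : (∑ j, (∑ k, G k j * w k) * u j) = 0 := by
          refine Finset.sum_eq_zero fun j _ => ?_
          rw [h1 j, zero_mul]
        rw [hz, add_zero]
        exact h2
      exact notMem_tangentCone hUopen hxU hAU hxD hx0 hv hu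
    · intro h
      by_cases hA : ∀ j, (∑ k, G k j * w k) = 0
      · have hF : 0 ≤ ∑ k, w k * F k := not_lt.1 fun hlt => h ⟨hA, hlt⟩
        refine ⟨0, hvmem _ ?_⟩
        have : (∑ k, w k * (F k + ∑ j, G k j * (0 : Fin m → ℝ) j)) = ∑ k, w k * F k := by
          simp
        rw [this]
        exact hF
      · push_neg at hA
        obtain ⟨j0, hj0⟩ := hA
        set t : ℝ := -(∑ k, w k * F k) / (∑ k, G k j0 * w k) with ht_def
        refine ⟨fun j => if j = j0 then t else 0, hvmem _ ?_⟩
        rw [hrearr]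
        have : (∑ j, (∑ k, G k j * w k) * (if j = j0 then t else 0)) =
            (∑ k, G k j0 * w k) * t := by
          rw [Finset.sum_eq_single j0]
          · simp
          · intro j _ hj; simp [hj]
          · intro hmem; exact absurd (Finset.mem_univ j0) hmem
        rw [this, ht_def, mul_div_cancel₀ _ hj0]
        simp
end

section
/- There is no function x = (x_1, x_2) : [0, ∞) → ℝ^2 such that x_2 is differentiable with x_2'(t) = −x_1(t) + 5·x_2(t) for all t ≥ 0, x_2(0) > 1/5, and |x_1(t)| + |x_2(t)| ≤ 1 for all t ≥ 0. -/
/-!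
Put `y = x₂ - 1/5`. Since `x₁ ≤ 1` on the trajectory, `y' = 5 y + (1 - x₁) ≥ 5 y`, so
`t ↦ y t * exp (-5 t)` is nondecreasing and `y t ≥ y 0 * exp (5 t)` grows without bound,
contradicting `x₂ ≤ 1`.
-/

open Real Set Filter

theorem mul_exp_le_of_hasDerivWithinAt_Ici {f f' : ℝ → ℝ} {a k : ℝ}
    (hf : ∀ t ∈ Ici a, HasDerivWithinAt f (f' t) (Ici a) t)
    (hk : ∀ t ∈ Ici a, k * f t ≤ f' t) {t : ℝ} (ht : a ≤ t) :
    f a * exp (k * (t - a)) ≤ f t := by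
  set g : ℝ → ℝ := fun s => f s * exp (-(k * (s - a)))
  have hg : ∀ s ∈ Ici a,
      HasDerivWithinAt g ((f' s - k * f s) * exp (-(k * (s - a)))) (Ici a) s := by
    intro s hs
    have hexp : HasDerivAt (fun s => exp (-(k * (s - a)))) (exp (-(k * (s - a))) * -k) s := by
      simpa using ((((hasDerivAt_id s).sub_const a).const_mul k).neg).exp
    exact ((hf s hs).mul hexp.hasDerivWithinAt).congr_deriv (by ring)
  have hmono : MonotoneOn g (Ici a) :=
    monotoneOn_of_hasDerivWithinAt_nonneg (convex_Ici a)
      (fun s hs => (hg s hs).continuousWithinAt)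
      (fun s hs => (hg s (interior_subset hs)).mono interior_subset)
      (fun s hs => mul_nonneg (sub_nonneg.2 (hk s (interior_subset hs))) (exp_pos _).le)
  have hle : g a ≤ g t := hmono self_mem_Ici ht ht
  have hga : g a = f a := by simp [g]
  calc f a * exp (k * (t - a)) ≤ g t * exp (k * (t - a)) := by
        rw [← hga]; exact mul_le_mul_of_nonneg_right hle (exp_pos _).le
    _ = f t := by simp only [g, mul_assoc, ← exp_add, neg_add_cancel, exp_zero, mul_one]

/-- counterexample of Section 3.2. There is no trajectory
`x = (x₁, x₂) : [0,∞) → ℝ²` with `x₂` differentiable satisfying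
`x₂'(t) = -x₁(t) + 5·x₂(t)` for all `t ≥ 0`, `x₂(0) > 1/5`, and
`|x₁(t)| + |x₂(t)| ≤ 1` for all `t ≥ 0`. -/
theorem stmt14 :
    ¬ ∃ x₁ x₂ : ℝ → ℝ,
        (∀ t : ℝ, 0 ≤ t → HasDerivWithinAt x₂ (-x₁ t + 5 * x₂ t) (Set.Ici 0) t) ∧
        1 / 5 < x₂ 0 ∧
        (∀ t : ℝ, 0 ≤ t → |x₁ t| + |x₂ t| ≤ 1) := by
  rintro ⟨x₁, x₂, hderiv, h0, hbound⟩
  have hx₁ : ∀ t, 0 ≤ t → x₁ t ≤ 1 := fun t ht => by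
    linarith [le_abs_self (x₁ t), abs_nonneg (x₂ t), hbound t ht]
  have hx₂ : ∀ t, 0 ≤ t → x₂ t ≤ 1 := fun t ht => by
    linarith [le_abs_self (x₂ t), abs_nonneg (x₁ t), hbound t ht]
  have hgrowth : ∀ t, 0 ≤ t → (x₂ 0 - 1 / 5) * exp (5 * t) ≤ x₂ t - 1 / 5 := fun t ht => by
    simpa only [sub_zero] using mul_exp_le_of_hasDerivWithinAt_Ici (k := 5)
      (fun s hs => (hderiv s hs).sub_const (1 / 5)) (fun s hs => by linarith [hx₁ s hs]) ht
  have hunbounded : Tendsto (fun t => (x₂ 0 - 1 / 5) * exp (5 * t)) atTop atTop :=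
    (tendsto_exp_atTop.comp (tendsto_id.const_mul_atTop (by norm_num))).const_mul_atTop
      (by linarith)
  obtain ⟨t, hlarge, ht⟩ := ((hunbounded.eventually_gt_atTop 1).and (eventually_ge_atTop 0)).exists
  linarith [hgrowth t ht, hx₂ t ht]
end
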